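/- arXiv:1202.2944 — 7 statements merged into one kernel-verified Lean document; each statement's English description precedes it below -/
import Mathlib

section
/- Let a, b be natural numbers with b ≥ 1 and let S be an a × b matrix over GF(2) of full column rank b such that every row of S has at most two nonzero entries. Then S has at least one row with exactly one nonzero entry. -/
/-!
Suppose no row has weight one. Then every row has weight `0` or `2`, so over GF(2) every row
sums to zero, i.e. the all-ones vector lies in the kernel of `S`. Full column rank forces the
kernel to be trivial, which is impossible when `b ≥ 1`.
-/

open Finset Matrix

theorem ZMod.sum_eq_card_filter_ne_zero {ι : Type*} [Fintype ι] (v : ι → ZMod 2) :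
    ∑ i, v i = (#{i | v i ≠ 0} : ZMod 2) := by
  rw [card_filter, Nat.cast_sum]
  refine sum_congr rfl fun i _ ↦ ?_
  generalize v i = x
  fin_cases x <;> rfl

theorem Matrix.mulVec_one_eq_zero_of_even_card_filter_ne_zero {m n : Type*} [Fintype n]
    (A : Matrix m n (ZMod 2)) (h : ∀ i, Even #{j | A i j ≠ 0}) : A *ᵥ 1 = 0 := by
  funext i
  simpa [mulVec, dotProduct, ZMod.sum_eq_card_filter_ne_zero, ZMod.natCast_eq_zero_iff_even]
    using h i

theorem Matrix.ker_mulVecLin_eq_bot_of_rank_eq_card {K m n : Type*} [Field K] [Fintype n]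
    (A : Matrix m n K) (h : A.rank = Fintype.card n) : LinearMap.ker A.mulVecLin = ⊥ := by
  have := LinearMap.finrank_range_add_finrank_ker A.mulVecLin
  rw [← Matrix.rank, h, Module.finrank_fintype_fun_eq_card] at this
  exact Submodule.finrank_eq_zero.mp (by omega)

/-- An `a × b` matrix over GF(2) (with `b ≥ 1`) of full column rank `b`
whose rows all have at most two nonzero entries must have a row with exactly one
nonzero entry. -/
theorem stmt_1 (a b : ℕ) (hb : 1 ≤ b) (S : Matrix (Fin a) (Fin b) (ZMod 2))
    (hrank : S.rank = b)
    (hrow : ∀ i : Fin a, (Finset.univ.filter fun j => S i j ≠ 0).card ≤ 2) :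
    ∃ i : Fin a, (Finset.univ.filter fun j => S i j ≠ 0).card = 1 := by
  by_contra! hne
  have heven (i : Fin a) : Even #{j | S i j ≠ 0} := by
    obtain h | h : #{j | S i j ≠ 0} = 0 ∨ #{j | S i j ≠ 0} = 2 := by
      have := hrow i; have := hne i; omega
    all_goals simp [h]
  have hker := S.ker_mulVecLin_eq_bot_of_rank_eq_card (by rwa [Fintype.card_fin])
  have hone : (1 : Fin b → ZMod 2) = 0 :=
    (LinearMap.ker_eq_bot'.mp hker) 1 (S.mulVec_one_eq_zero_of_even_card_filter_ne_zero heven)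
  exact one_ne_zero (congrFun hone ⟨0, hb⟩)
end

section
/- Let a, b be natural numbers with a ≥ b and let S be an a × b matrix over GF(2) of full column rank b such that every row of S has at most two nonzero entries. Then the linear system S z = c can be solved by backward substitution; formally, there exist an injective map r : Fin b → Fin a (a selection of rows) and a bijection c : Fin b → Fin b (an ordering of columns) such that for every j, the entry S (r j) (c j) equals 1 and S (r j) (c k) = 0 for every k > j. -/
/-!
Full column rank means `S *ᵥ v = 0` forces `v = 0`. Over GF(2) the sum of the entries of a row
is its weight mod 2, so if every row had weight `0` or `2` the all-ones vector would lie in the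
kernel. Hence some row `i₀` has a single `1`, in column `j₀`: it becomes the first pivot. Deleting
row `i₀` and column `j₀` keeps the kernel trivial and the row weights at most two, and a
backward-substitution order of the smaller matrix, shifted by one, completes the pivot.
-/

open Finset Matrix

section Triangular

variable {ι R : Type*} [Zero R] [One R] {b : ℕ}

/-- Rows `r` and columns `c` put `S` in lower triangular form with unit diagonal. -/
def IsTriangularOrder (S : Matrix ι (Fin b) R) (r : Fin b → ι) (c : Fin b ≃ Fin b) : Prop :=
  Function.Injective r ∧ ∀ j, S (r j) (c j) = 1 ∧ ∀ k, j < k → S (r j) (c k) = 0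

noncomputable def Fin.consSuccAboveEquiv (j₀ : Fin (b + 1)) (c : Fin b ≃ Fin b) :
    Fin (b + 1) ≃ Fin (b + 1) :=
  Equiv.ofBijective (Fin.cons j₀ (j₀.succAbove ∘ c)) <| Finite.injective_iff_bijective.mp <|
    Fin.cons_injective_iff.mpr
      ⟨fun ⟨k, hk⟩ => Fin.succAbove_ne j₀ (c k) hk,
        Fin.succAbove_right_injective.comp c.injective⟩

@[simp]
lemma Fin.consSuccAboveEquiv_zero (j₀ : Fin (b + 1)) (c : Fin b ≃ Fin b) :
    Fin.consSuccAboveEquiv j₀ c 0 = j₀ := by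
  simp [Fin.consSuccAboveEquiv]

@[simp]
lemma Fin.consSuccAboveEquiv_succ (j₀ : Fin (b + 1)) (c : Fin b ≃ Fin b) (j : Fin b) :
    Fin.consSuccAboveEquiv j₀ c j.succ = j₀.succAbove (c j) := by
  simp [Fin.consSuccAboveEquiv]

lemma IsTriangularOrder.cons {S : Matrix ι (Fin (b + 1)) R} {i₀ : ι} {j₀ : Fin (b + 1)}
    (hpivot : S i₀ j₀ = 1) (hzero : ∀ j, S i₀ (j₀.succAbove j) = 0)
    {r : Fin b → {i // i ≠ i₀}} {c : Fin b ≃ Fin b}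
    (h : IsTriangularOrder (S.submatrix Subtype.val j₀.succAbove) r c) :
    IsTriangularOrder S (Fin.cons i₀ (Subtype.val ∘ r)) (Fin.consSuccAboveEquiv j₀ c) := by
  obtain ⟨hr, hc⟩ := h
  refine ⟨Fin.cons_injective_iff.mpr ⟨fun ⟨k, hk⟩ => (r k).2 hk, Subtype.val_injective.comp hr⟩,
    fun j => ?_⟩
  induction j using Fin.cases with
  | zero =>
    refine ⟨by simpa using hpivot, fun k hk => ?_⟩
    induction k using Fin.cases with
    | zero => exact absurd hk (lt_irrefl 0)
    | succ k => simpa using hzero (c k)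
  | succ j =>
    refine ⟨by simpa using (hc j).1, fun k hk => ?_⟩
    induction k using Fin.cases with
    | zero => exact absurd hk (Fin.not_lt_zero _)
    | succ k => simpa using (hc j).2 k (Fin.succ_lt_succ_iff.mp hk)

end Triangular

lemma ZMod.two_sum_eq_card_filter_ne_zero {n : Type*} [Fintype n] (v : n → ZMod 2) :
    ∑ j, v j = (#{j | v j ≠ 0} : ZMod 2) := by
  rw [← Finset.sum_filter_ne_zero, Finset.card_eq_sum_ones, Nat.cast_sum, Nat.cast_one]
  exact Finset.sum_congr rfl fun j hj => Fin.eq_one_of_ne_zero _ (Finset.mem_filter.mp hj).2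

lemma Matrix.mulVec_insertNth_zero {ι R : Type*} [NonUnitalNonAssocSemiring R] {b : ℕ}
    (S : Matrix ι (Fin (b + 1)) R) (j₀ : Fin (b + 1)) (v : Fin b → R) :
    S *ᵥ j₀.insertNth 0 v = S.submatrix id j₀.succAbove *ᵥ v := by
  ext i
  simp [mulVec, dotProduct, Fin.sum_univ_succAbove _ j₀]

section GF2

variable {ι : Type*} {b : ℕ}

lemma exists_row_card_filter_ne_zero_eq_one (S : Matrix ι (Fin (b + 1)) (ZMod 2))
    (hker : ∀ v, S *ᵥ v = 0 → v = 0) (hrow : ∀ i, #{j | S i j ≠ 0} ≤ 2) :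
    ∃ i, #{j | S i j ≠ 0} = 1 := by
  by_contra! hne
  have hones : S *ᵥ 1 = 0 := by
    ext i
    have hweight : #{j | S i j ≠ 0} = 0 ∨ #{j | S i j ≠ 0} = 2 := by
      have := hrow i; have := hne i; omega
    simp only [mulVec, dotProduct, Pi.one_apply, mul_one, Pi.zero_apply,
      ZMod.two_sum_eq_card_filter_ne_zero]
    rcases hweight with h | h <;> rw [h] <;> decide
  simpa using congrFun (hker 1 hones) 0

lemma eq_zero_of_submatrix_succAbove_mulVec_eq_zero (S : Matrix ι (Fin (b + 1)) (ZMod 2))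
    (hker : ∀ v, S *ᵥ v = 0 → v = 0) {i₀ : ι} {j₀ : Fin (b + 1)}
    (hzero : ∀ j, S i₀ (j₀.succAbove j) = 0) (v : Fin b → ZMod 2)
    (hv : S.submatrix (Subtype.val : {i // i ≠ i₀} → ι) j₀.succAbove *ᵥ v = 0) : v = 0 := by
  have hS : S *ᵥ j₀.insertNth 0 v = 0 := by
    rw [mulVec_insertNth_zero]
    ext i
    by_cases hi : i = i₀
    · subst hi; simp [mulVec, dotProduct, hzero]
    · exact congrFun hv ⟨i, hi⟩
  funext j
  simpa using congrFun (hker _ hS) (j₀.succAbove j)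

theorem exists_isTriangularOrder_of_card_filter_ne_zero_le_two :
    ∀ (S : Matrix ι (Fin b) (ZMod 2)), (∀ v, S *ᵥ v = 0 → v = 0) →
      (∀ i, #{j | S i j ≠ 0} ≤ 2) → ∃ r c, IsTriangularOrder S r c := by
  induction b generalizing ι with
  | zero => exact fun _ _ _ => ⟨Fin.elim0, Equiv.refl _, fun x => x.elim0, fun j => j.elim0⟩
  | succ b ih =>
    intro S hker hrow
    obtain ⟨i₀, hi₀⟩ := exists_row_card_filter_ne_zero_eq_one S hker hrow
    obtain ⟨j₀, hj₀⟩ := Finset.card_eq_one.mp hi₀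
    have hpivot : S i₀ j₀ = 1 := by
      have : j₀ ∈ ({j | S i₀ j ≠ 0} : Finset _) := hj₀ ▸ Finset.mem_singleton_self j₀
      exact Fin.eq_one_of_ne_zero _ (Finset.mem_filter.mp this).2
    have hzero : ∀ j, S i₀ (j₀.succAbove j) = 0 := fun j => by
      by_contra h
      have : j₀.succAbove j ∈ ({j₀} : Finset _) := hj₀ ▸ by simpa using h
      exact Fin.succAbove_ne j₀ j (Finset.mem_singleton.mp this)
    obtain ⟨r, c, h⟩ := ih (S.submatrix Subtype.val j₀.succAbove)
      (eq_zero_of_submatrix_succAbove_mulVec_eq_zero S hker hzero)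
      (fun i => (Finset.card_le_card_of_injOn j₀.succAbove (fun j hj => by simpa using (Finset.mem_filter.mp hj).2)
        (Fin.succAbove_right_injective.injOn)).trans (hrow i))
    exact ⟨_, _, h.cons hpivot hzero⟩

end GF2

lemma Matrix.eq_zero_of_mulVec_eq_zero_of_rank_eq {K : Type*} [Field K] {m : Type*} [Fintype m] {b : ℕ}
    (S : Matrix m (Fin b) K) (hrank : S.rank = b) (v : Fin b → K) (hv : S *ᵥ v = 0) : v = 0 := by
  have hker : LinearMap.ker S.mulVecLin = ⊥ := by
    have := LinearMap.finrank_range_add_finrank_ker S.mulVecLin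
    rw [← Matrix.rank, hrank, Module.finrank_fin_fun] at this
    exact Submodule.finrank_eq_zero.mp (by omega)
  exact ker_mulVecLin_eq_bot_iff.mp hker v hv

theorem stmt_3_general (a b : ℕ) (S : Matrix (Fin a) (Fin b) (ZMod 2))
    (hrank : S.rank = b)
    (hrow : ∀ i : Fin a, (Finset.univ.filter fun j => S i j ≠ 0).card ≤ 2) :
    ∃ (r : Fin b → Fin a) (c : Fin b ≃ Fin b), Function.Injective r ∧
      ∀ j : Fin b, S (r j) (c j) = 1 ∧ ∀ k : Fin b, j < k → S (r j) (c k) = 0 :=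
  exists_isTriangularOrder_of_card_filter_ne_zero_le_two S
    (S.eq_zero_of_mulVec_eq_zero_of_rank_eq hrank) hrow

/-- An `a × b` matrix over GF(2) (`a ≥ b`) of full column rank whose
rows have weight at most two can be solved by backward substitution: there is an
injective selection of rows `r` and an ordering of the columns `c` such that row
`r j` has a `1` in column `c j` and zeros in all columns `c k` with `k > j`. -/
theorem stmt_3 (a b : ℕ) (hab : b ≤ a) (S : Matrix (Fin a) (Fin b) (ZMod 2))
    (hrank : S.rank = b)
    (hrow : ∀ i : Fin a, (Finset.univ.filter fun j => S i j ≠ 0).card ≤ 2) :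
    ∃ (r : Fin b → Fin a) (c : Fin b ≃ Fin b), Function.Injective r ∧
      ∀ j : Fin b, S (r j) (c j) = 1 ∧ ∀ k : Fin b, j < k → S (r j) (c k) = 0 :=
  stmt_3_general a b S hrank hrow
end

section
/- Let m_s, m_r be natural numbers with 1 ≤ m_s ≤ m_r. Consider the set E of all natural numbers e with e ≤ m_r such that every decomposition e = e1 + e2 with e1 ≤ m_s and e2 ≤ m_r − m_s satisfies 2·e1 + e2 ≤ m_r. Then the maximum element of E equals ⌊m_r/2⌋ if m_r ≤ 2·m_s, and equals m_r − m_s if m_r > 2·m_s. -/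
/-!
Since `2 * e1 + e2 = e + e1`, the binding decomposition of `e` puts as many erasures as possible on
the source–relay nodes, `e1 = min e m_s`; so `e` is admissible exactly when `e + min e m_s ≤ m_r`.
This condition is monotone in `e`, and its largest solution is `m_r / 2` while `m_r / 2 ≤ m_s`,
and `m_r - m_s` once the source–relay nodes are exhausted.
-/

theorem admissible_iff_add_min_le (m_s m_r e : ℕ) :
    (e ≤ m_r ∧ ∀ e1 e2 : ℕ, e = e1 + e2 → e1 ≤ m_s → e2 ≤ m_r - m_s → 2 * e1 + e2 ≤ m_r) ↔
      e + min e m_s ≤ m_r := by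
  constructor
  · rintro ⟨he, hdecomp⟩
    have := hdecomp (min e m_s) (e - min e m_s) (by omega) (min_le_right _ _) (by omega)
    omega
  · exact fun h => ⟨by omega, fun e1 e2 _ _ _ => by omega⟩

theorem isGreatest_add_min_le (s r : ℕ) :
    IsGreatest {e : ℕ | e + min e s ≤ r} (if r ≤ 2 * s then r / 2 else r - s) := by
  constructor <;> split_ifs <;> simp only [Set.mem_ofPred_eq, mem_upperBounds] <;> omega

theorem stmt_4_general (m_s m_r : ℕ) :
    IsGreatest
      {e : ℕ | e ≤ m_r ∧ ∀ e1 e2 : ℕ, e = e1 + e2 → e1 ≤ m_s → e2 ≤ m_r - m_s →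
        2 * e1 + e2 ≤ m_r}
      (if m_r ≤ 2 * m_s then m_r / 2 else m_r - m_s) := by
  simpa only [admissible_iff_add_min_le] using isGreatest_add_min_le m_s m_r

/-- For `1 ≤ m_s ≤ m_r`, the greatest `e ≤ m_r` such that every
decomposition `e = e1 + e2` with `e1 ≤ m_s`, `e2 ≤ m_r - m_s` satisfies
`2 e1 + e2 ≤ m_r` equals `⌊m_r/2⌋` if `m_r ≤ 2 m_s` and `m_r - m_s` otherwise. -/
theorem stmt_4 (m_s m_r : ℕ) (h1 : 1 ≤ m_s) (h2 : m_s ≤ m_r) :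
    IsGreatest
      {e : ℕ | e ≤ m_r ∧ ∀ e1 e2 : ℕ, e = e1 + e2 → e1 ≤ m_s → e2 ≤ m_r - m_s →
        2 * e1 + e2 ≤ m_r}
      (if m_r ≤ 2 * m_s then m_r / 2 else m_r - m_s) :=
  stmt_4_general m_s m_r
end

section
/- Let m ≥ 1 and let M be a (2m) × m matrix over GF(2) whose top m × m block is the identity matrix and each of whose bottom m rows has exactly two nonzero entries. Then there exists a subset E of {0, …, m−1} with |E| ≤ 3 such that the submatrix of M obtained by deleting, for every i ∈ E, both row i and row m + i, has rank strictly less than m (indeed it has an all-zero column). -/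
/-!
Double counting the nonzero entries of the bottom block, `m` rows with two entries each spread
over `m` columns, gives a column `j` with at most two of them. Erasing channel `j` together with
the (at most two) relays whose transmission sets contain `j` kills every nonzero entry of
column `j`, since in the identity block column `j` is nonzero only in row `j`.
-/

open Finset

namespace Matrix

variable {ι κ R : Type*} [Fintype ι] [Fintype κ]

theorem rank_lt_card_width_of_col_eq_zero [Field R] [DecidableEq κ] (A : Matrix ι κ R) (j : κ)
    (hj : ∀ i, A i j = 0) : A.rank < Fintype.card κ := by
  have hsupp : Function.support Aᵀ.row ⊆ (univ.erase j : Finset κ) := fun k hk => by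
    refine mem_erase.2 ⟨?_, mem_univ k⟩
    rintro rfl
    exact hk (funext hj)
  calc A.rank = Aᵀ.rank := A.rank_transpose.symm
    _ ≤ (univ.erase j).card := Aᵀ.rank_le_card_of_support_subset _ hsupp
    _ < Fintype.card κ := card_erase_lt_of_mem (mem_univ j)

theorem exists_card_col_ne_zero_le [Zero R] [DecidableEq R] [Nonempty κ] (A : Matrix ι κ R)
    (k : ℕ) (hrow : ∀ i, #{j | A i j ≠ 0} ≤ k)
    (hcard : Fintype.card ι ≤ Fintype.card κ) :
    ∃ j, #{i | A i j ≠ 0} ≤ k := by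
  by_contra! hcol
  have := card_nsmul_lt_card_nsmul_of_lt_of_le (fun j i => A i j ≠ 0) univ_nonempty
    (fun j _ => hcol j) (fun i _ => hrow i)
  simp only [card_univ, smul_eq_mul] at this
  exact absurd this (not_lt.2 (Nat.mul_le_mul_right k hcard))

end Matrix

/-- Lemma 2: Let `M` be a `2m × m` matrix over GF(2) whose top
`m × m` block is the identity and each of whose bottom `m` rows has exactly two
nonzero entries. Then there is a set `E` of at most `3` channel indices such that
deleting, for every `i ∈ E`, both row `i` and row `m + i` leaves a matrix with an
all-zero column, hence of rank strictly less than `m`. -/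
theorem stmt_5 (m : ℕ) (hm : 1 ≤ m)
    (M : Matrix (Fin m ⊕ Fin m) (Fin m) (ZMod 2))
    (htop : ∀ i j : Fin m, M (Sum.inl i) j = if i = j then 1 else 0)
    (hbot : ∀ u : Fin m, (Finset.univ.filter fun j => M (Sum.inr u) j ≠ 0).card = 2) :
    ∃ E : Finset (Fin m), E.card ≤ 3 ∧
      ∃ j : Fin m,
        (∀ i : Fin m, i ∉ E → M (Sum.inl i) j = 0 ∧ M (Sum.inr i) j = 0) ∧
        (M.submatrix
          (Sum.map (Subtype.val : {i : Fin m // i ∉ E} → Fin m)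
            (Subtype.val : {i : Fin m // i ∉ E} → Fin m)) id).rank < m := by
  have : Nonempty (Fin m) := ⟨⟨0, hm⟩⟩
  obtain ⟨j, hj⟩ := Matrix.exists_card_col_ne_zero_le (M.submatrix Sum.inr id) 2
    (fun u => (hbot u).le) le_rfl
  set S : Finset (Fin m) := {u | M (Sum.inr u) j ≠ 0}
  have hzero : ∀ i, i ∉ insert j S → M (Sum.inl i) j = 0 ∧ M (Sum.inr i) j = 0 := by
    intro i hi
    rw [mem_insert, not_or] at hi
    exact ⟨by simp [htop, hi.1], by simpa [S] using hi.2⟩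
  refine ⟨insert j S, (card_insert_le j S).trans (Nat.succ_le_succ hj), j, hzero, ?_⟩
  simpa using Matrix.rank_lt_card_width_of_col_eq_zero _ j <| by
    rintro (⟨i, hi⟩ | ⟨i, hi⟩)
    exacts [(hzero i hi).1, (hzero i hi).2]
end

section
/- Let m ≥ 4 and let M be the (2m) × m matrix over GF(2), with rows indexed by Fin m ⊕ Z/m and columns by Z/m, defined by: the top block is the identity (M(i, j) = 1 iff i = j), and the bottom block satisfies M(m + u, v) = 1 if and only if v = u + 1 or v = u + 2 in Z/m. Then: (i) for every subset E of Z/m with |E| = 2, the submatrix of M obtained by deleting, for every i ∈ E, both row i and row m + i, has full column rank m; and (ii) there exists a subset E of Z/m with |E| = 3 such that the corresponding submatrix has rank strictly less than m. (Hence the metric d_M of this coding matrix equals 3.) -/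
/-!
A vector `x` lies in the kernel of the matrix with the channels `E` erased iff `x` vanishes off `E`
and `x (u + 1) = -x (u + 2)` for every `u ∉ E`. Suppose `|E| ≤ 2` and `x v ≠ 0`, so `v ∈ E`. If
`v - 2 ∈ E`, the condition at `u = v - 1` puts `v + 1` into `E` too; otherwise the condition at
`u = v - 2` puts `v - 1` into `E`, and then the one at `u = v - 3` propagates `x (v - 2) = 0` up to
`x v = 0`. For `m ≥ 4` the points involved are distinct, which gives the contradiction. For
`E = {0, 1, 2}` the unit vector at `2` is a nonzero kernel vector, as no row `u ∉ E` reaches `2`.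
-/

open Matrix

theorem Matrix.rank_eq_card_width_iff {m n K : Type*} [Field K] [Fintype n] [DecidableEq n]
    (A : Matrix m n K) : A.rank = Fintype.card n ↔ ∀ x, A *ᵥ x = 0 → x = 0 := by
  have := LinearMap.finrank_range_add_finrank_ker A.mulVecLin
  rw [Module.finrank_fintype_fun_eq_card] at this
  rw [← ker_mulVecLin_eq_bot_iff, ← Submodule.finrank_eq_zero, rank]
  omega

theorem Matrix.rank_lt_card_width_of_mulVec_eq_zero {m n K : Type*} [Field K] [Fintype n]
    [DecidableEq n] (A : Matrix m n K) {x : n → K} (hx : x ≠ 0) (hAx : A *ᵥ x = 0) :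
    A.rank < Fintype.card n :=
  A.rank_le_card_width.lt_of_ne fun h => hx ((A.rank_eq_card_width_iff.1 h) x hAx)

theorem ZMod.natCast_ne_zero_of_lt {m k : ℕ} (hk : 0 < k) (hkm : k < m) : (k : ZMod m) ≠ 0 :=
  fun h => absurd (Nat.le_of_dvd hk ((ZMod.natCast_eq_zero_iff k m).1 h)) (by omega)

theorem ZMod.eq_zero_of_card_le_two_of_shift_iff {α : Type*} [Zero α] {m : ℕ} (hm : 4 ≤ m)
    {E : Finset (ZMod m)} (hE : E.card ≤ 2) {x : ZMod m → α} (hoff : ∀ i ∉ E, x i = 0)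
    (hshift : ∀ u ∉ E, x (u + 1) = 0 ↔ x (u + 2) = 0) : x = 0 := by
  have h1 : (1 : ZMod m) ≠ 0 := by
    exact_mod_cast natCast_ne_zero_of_lt (k := 1) one_pos (by omega)
  have h2 : (2 : ZMod m) ≠ 0 := by
    exact_mod_cast natCast_ne_zero_of_lt (k := 2) two_pos (by omega)
  have h3 : (3 : ZMod m) ≠ 0 := by
    exact_mod_cast natCast_ne_zero_of_lt (k := 3) three_pos (by omega)
  have not_three_mem :
      ∀ a ∈ E, ∀ b ∈ E, ∀ c ∈ E, a ≠ b → a ≠ c → b ≠ c → False :=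
    fun a ha b hb c hc hab hac hbc =>
      hE.not_gt (Finset.two_lt_card.2 ⟨a, ha, b, hb, c, hc, hab, hac, hbc⟩)
  have mem_of_ne_zero : ∀ i, x i ≠ 0 → i ∈ E := fun i hi => by_contra fun h => hi (hoff i h)
  funext v
  by_contra hv
  have hvE : v ∈ E := mem_of_ne_zero v hv
  by_cases hv2 : v - 2 ∈ E
  · have hv1 : v - 1 ∉ E := fun h => not_three_mem v hvE _ h _ hv2
      (fun h' => h1 (by linear_combination h')) (fun h' => h2 (by linear_combination h'))
      (fun h' => h1 (by linear_combination h'))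
    have hshift' := hshift (v - 1) hv1
    rw [sub_add_cancel, show v - 1 + 2 = v + 1 by ring] at hshift'
    exact not_three_mem v hvE _ (mem_of_ne_zero _ (hshift'.not.1 hv)) _ hv2
      (fun h' => h1 (by linear_combination -h')) (fun h' => h2 (by linear_combination h'))
      (fun h' => h3 (by linear_combination h'))
  · have hshift₂ := hshift (v - 2) hv2
    rw [show v - 2 + 1 = v - 1 by ring, show v - 2 + 2 = v by ring] at hshift₂
    have hv1 : v - 1 ∈ E := mem_of_ne_zero _ (hshift₂.not.2 hv)
    have hv3 : v - 3 ∉ E := fun h => not_three_mem v hvE _ hv1 _ h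
      (fun h' => h1 (by linear_combination h')) (fun h' => h3 (by linear_combination h'))
      (fun h' => h2 (by linear_combination h'))
    have hshift₃ := hshift (v - 3) hv3
    rw [show v - 3 + 1 = v - 2 by ring, show v - 3 + 2 = v - 1 by ring] at hshift₃
    exact hv (hshift₂.1 (hshift₃.1 (hoff _ hv2)))

def eraseChannels {ι κ R : Type*} (M : Matrix (ι ⊕ ι) κ R) (E : Finset ι) :
    Matrix ({i // i ∉ E} ⊕ {i // i ∉ E}) κ R :=
  M.submatrix (Sum.map Subtype.val Subtype.val) id

section CodingMatrix

variable {K : Type*} [NonAssocSemiring K] {m : ℕ} [NeZero m]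
  {M : Matrix (ZMod m ⊕ ZMod m) (ZMod m) K}

theorem mulVec_inl_eq_of_top (htop : ∀ i j : ZMod m, M (Sum.inl i) j = if i = j then 1 else 0)
    (x : ZMod m → K) (i : ZMod m) : (M *ᵥ x) (Sum.inl i) = x i := by
  have hrow : M (Sum.inl i) = Pi.single i 1 := by
    funext j
    simp only [htop, Pi.single_apply, eq_comm]
  exact (congrArg (· ⬝ᵥ x) hrow).trans (single_one_dotProduct i x)

theorem mulVec_inr_eq_of_bot (hm : 1 < m)
    (hbot : ∀ u v : ZMod m, M (Sum.inr u) v = if v = u + 1 ∨ v = u + 2 then 1 else 0)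
    (x : ZMod m → K) (u : ZMod m) : (M *ᵥ x) (Sum.inr u) = x (u + 1) + x (u + 2) := by
  have h1 : (1 : ZMod m) ≠ 0 := by
    exact_mod_cast ZMod.natCast_ne_zero_of_lt (k := 1) one_pos hm
  have hne : u + 2 ≠ u + 1 := fun h => h1 (by linear_combination h)
  have hrow : M (Sum.inr u) = Pi.single (u + 1) 1 + Pi.single (u + 2) 1 := by
    funext v
    by_cases hv : v = u + 2 <;> simp [hbot, Pi.single_apply, hv, hne]
  exact (congrArg (· ⬝ᵥ x) hrow).trans
    (by rw [add_dotProduct, single_one_dotProduct, single_one_dotProduct])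

theorem eraseChannels_mulVec_eq_zero_iff (hm : 1 < m)
    (htop : ∀ i j : ZMod m, M (Sum.inl i) j = if i = j then 1 else 0)
    (hbot : ∀ u v : ZMod m, M (Sum.inr u) v = if v = u + 1 ∨ v = u + 2 then 1 else 0)
    (E : Finset (ZMod m)) (x : ZMod m → K) :
    eraseChannels M E *ᵥ x = 0 ↔ (∀ i ∉ E, x i = 0) ∧ ∀ u ∉ E, x (u + 1) + x (u + 2) = 0 := by
  have hentry : ∀ k, (eraseChannels M E *ᵥ x) k = (M *ᵥ x) (Sum.map Subtype.val Subtype.val k) :=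
    fun _ => rfl
  simp only [funext_iff, Sum.forall, hentry, Sum.map_inl, Sum.map_inr,
    mulVec_inl_eq_of_top htop, mulVec_inr_eq_of_bot hm hbot, Pi.zero_apply, Subtype.forall]

theorem eraseChannels_zero_one_two_mulVec_single_two (hm : 1 < m)
    (htop : ∀ i j : ZMod m, M (Sum.inl i) j = if i = j then 1 else 0)
    (hbot : ∀ u v : ZMod m, M (Sum.inr u) v = if v = u + 1 ∨ v = u + 2 then 1 else 0) :
    eraseChannels M {0, 1, 2} *ᵥ Pi.single 2 1 = 0 := by
  refine (eraseChannels_mulVec_eq_zero_iff hm htop hbot _ _).2 ⟨fun i hi => ?_, fun u hu => ?_⟩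
  · simp only [Finset.mem_insert, Finset.mem_singleton, not_or] at hi
    exact Pi.single_eq_of_ne hi.2.2 _
  · simp only [Finset.mem_insert, Finset.mem_singleton, not_or] at hu
    rw [Pi.single_eq_of_ne (fun h => hu.2.1 (by linear_combination h)),
      Pi.single_eq_of_ne (fun h => hu.1 (by linear_combination h)), add_zero]

end CodingMatrix

/-- For `m ≥ 4`, the coding matrix of Algorithm 1 (top block the
identity, bottom block `M (m+u) v = 1` iff `v = u+1` or `v = u+2` in `ZMod m`)
has `d_M = 3`: every submatrix obtained by erasing two channels (deleting rows
`i` and `m+i` for `i ∈ E`, `|E| = 2`) has full column rank `m`, while some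
erasure of three channels yields rank strictly less than `m`. -/
theorem stmt_6 (m : ℕ) [NeZero m] (hm : 4 ≤ m)
    (M : Matrix (ZMod m ⊕ ZMod m) (ZMod m) (ZMod 2))
    (htop : ∀ i j : ZMod m, M (Sum.inl i) j = if i = j then 1 else 0)
    (hbot : ∀ u v : ZMod m, M (Sum.inr u) v = if v = u + 1 ∨ v = u + 2 then 1 else 0) :
    (∀ E : Finset (ZMod m), E.card = 2 →
      (M.submatrix
        (Sum.map (Subtype.val : {i : ZMod m // i ∉ E} → ZMod m)
          (Subtype.val : {i : ZMod m // i ∉ E} → ZMod m)) id).rank = m) ∧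
    ∃ E : Finset (ZMod m), E.card = 3 ∧
      (M.submatrix
        (Sum.map (Subtype.val : {i : ZMod m // i ∉ E} → ZMod m)
          (Subtype.val : {i : ZMod m // i ∉ E} → ZMod m)) id).rank < m := by
  have h1 : (1 : ZMod m) ≠ 0 := by
    exact_mod_cast ZMod.natCast_ne_zero_of_lt (k := 1) one_pos (by omega)
  have h2 : (2 : ZMod m) ≠ 0 := by
    exact_mod_cast ZMod.natCast_ne_zero_of_lt (k := 2) two_pos (by omega)
  refine ⟨fun E hE => ?_, {0, 1, 2}, ?_, ?_⟩
  · refine ((eraseChannels M E).rank_eq_card_width_iff.2 fun x hx => ?_).trans (ZMod.card m)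
    obtain ⟨hoff, hsum⟩ := (eraseChannels_mulVec_eq_zero_iff (by omega) htop hbot E x).1 hx
    refine ZMod.eq_zero_of_card_le_two_of_shift_iff hm hE.le hoff fun u hu => ?_
    rw [add_eq_zero_iff_eq_neg.1 (hsum u hu), neg_eq_zero]
  · exact Finset.card_eq_three.2
      ⟨0, 1, 2, h1.symm, h2.symm, fun h => h1 (by linear_combination -h), rfl⟩
  · refine (rank_lt_card_width_of_mulVec_eq_zero _ (Pi.single_ne_zero_iff.2 one_ne_zero)
      (eraseChannels_zero_one_two_mulVec_single_two (by omega) htop hbot)).trans_eq (ZMod.card m)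
end

section
/- Let m_s, m_r be natural numbers with m_s < m_r ≤ 2·m_s. Then ⌈(m_s · ⌊m_r/2⌋) / m_r⌉ = ⌈m_s/2⌉, where ⌈·⌉ denotes the ceiling of the rational quotient. -/
/-!
Since `⌊r/2⌋ = r/2 - (r mod 2)/2`, the left-hand quotient is `s/2 - ε` with
`ε = s (r mod 2) / (2r)`, and `0 ≤ ε < 1/2` because `s < r`. The ceiling of a half-integer
`n/2` is at most `n/2 + 1/2`, so lowering `n/2` by less than `1/2` leaves its ceiling unchanged.
-/

theorem Nat.cast_mul_div_two_div {K : Type*} [Field K] [CharZero K] (s : ℕ) {r : ℕ} (hr : r ≠ 0) :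
    ((s : K) * ((r / 2 : ℕ) : K)) / r = s / 2 - s * (r % 2 : ℕ) / (2 * r) := by
  have hdiv : ((r / 2 : ℕ) : K) = (r - (r % 2 : ℕ)) / 2 := by
    rw [eq_div_iff two_ne_zero, eq_sub_iff_add_eq]
    exact_mod_cast Nat.div_add_mod' r 2
  have hr' : (r : K) ≠ 0 := Nat.cast_ne_zero.mpr hr
  rw [hdiv]
  field_simp

theorem Nat.cast_mul_mod_two_div_lt {K : Type*} [Field K] [LinearOrder K] [IsStrictOrderedRing K]
    {s r : ℕ} (h : s < r) : (s : K) * (r % 2 : ℕ) / (2 * r) < 1 / 2 := by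
  have hr : (0 : K) < r := by exact_mod_cast (Nat.zero_le s).trans_lt h
  have hmod : ((r % 2 : ℕ) : K) ≤ 1 := by exact_mod_cast Nat.le_of_lt_succ (Nat.mod_lt r two_pos)
  have hs : (s : K) < r := by exact_mod_cast h
  rw [div_lt_iff₀ (by positivity)]
  nlinarith [(Nat.cast_nonneg s : (0 : K) ≤ s)]

section
variable {K : Type*} [Field K] [LinearOrder K] [IsStrictOrderedRing K] [FloorRing K]

theorem Int.ceil_intCast_div_two_le (n : ℤ) : (⌈(n : K) / 2⌉ : K) ≤ n / 2 + 1 / 2 := by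
  have hlt : ((2 * ⌈(n : K) / 2⌉ : ℤ) : K) < ((n + 2 : ℤ) : K) := by
    push_cast
    linarith [Int.ceil_lt_add_one ((n : K) / 2)]
  have hle : ((2 * ⌈(n : K) / 2⌉ : ℤ) : K) ≤ ((n + 1 : ℤ) : K) := by
    have := Int.cast_lt.mp hlt
    exact Int.cast_le.mpr (by omega)
  push_cast at hle
  linarith

theorem Int.ceil_intCast_div_two_sub {ε : K} (n : ℤ) (h0 : 0 ≤ ε) (h : ε < 1 / 2) :
    ⌈(n : K) / 2 - ε⌉ = ⌈(n : K) / 2⌉ := by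
  rw [Int.ceil_eq_iff]
  constructor
  · linarith [Int.ceil_intCast_div_two_le (K := K) n]
  · linarith [Int.le_ceil ((n : K) / 2)]

end

theorem stmt_11_general (m_s m_r : ℕ) (h1 : m_s < m_r) :
    ⌈((m_s : ℚ) * ((m_r / 2 : ℕ) : ℚ)) / (m_r : ℚ)⌉ = ⌈(m_s : ℚ) / 2⌉ := by
  rw [Nat.cast_mul_div_two_div m_s (Nat.ne_zero_of_lt h1)]
  have hgap : 0 ≤ (m_s : ℚ) * (m_r % 2 : ℕ) / (2 * m_r) := by positivity
  simpa using Int.ceil_intCast_div_two_sub (m_s : ℤ) hgap (Nat.cast_mul_mod_two_div_lt h1)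

/-- second case of Corollary 3: for `m_s < m_r ≤ 2 m_s`,
`⌈(m_s ⌊m_r/2⌋) / m_r⌉ = ⌈m_s / 2⌉` (ceilings of rational quotients,
`⌊m_r/2⌋` natural-number floor division). -/
theorem stmt_11 (m_s m_r : ℕ) (h1 : m_s < m_r) (h2 : m_r ≤ 2 * m_s) :
    ⌈((m_s : ℚ) * ((m_r / 2 : ℕ) : ℚ)) / (m_r : ℚ)⌉ = ⌈(m_s : ℚ) / 2⌉ :=
  stmt_11_general m_s m_r h1
end

section
/- Let m_s ≤ m_r be natural numbers with m_s ≥ 1, let T : Fin m_r → Finset (Fin m_s) be a family of transmission sets, and let M be the (m_s + m_r) × m_s matrix over GF(2) whose top m_s × m_s block is the identity and whose bottom block satisfies M(m_s + r, s) = 1 if and only if s ∈ T(r). Fix a source s and let t_s = |{r : s ∈ T(r)}|. Then there exists a set E of channel indices in Fin m_r with |E| ≤ 1 + t_s such that the submatrix of M obtained by deleting, for every i ∈ E, row i (when i < m_s) and row m_s + i, has an all-zero column, and hence has rank strictly less than m_s. -/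
open Finset
open scoped Matrix

/-- The transpose has a zero row, so its rank is bounded by the number of the remaining rows. -/
theorem Matrix.rank_lt_card_width_of_col_eq_zero_s13 {m n R : Type*} [Fintype m] [Fintype n]
    [DecidableEq n] [Field R] (A : Matrix m n R) (j : n) (hj : ∀ i, A i j = 0) :
    A.rank < Fintype.card n := by
  rw [← Matrix.rank_transpose]
  calc Aᵀ.rank ≤ (univ.erase j).card := by
        refine Aᵀ.rank_le_card_of_support_subset _ fun k hk => mem_erase.2 ⟨?_, mem_univ k⟩
        rintro rfl
        exact hk (funext hj)
    _ < Fintype.card n := card_erase_lt_of_mem (mem_univ j)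

theorem stmt_13_general (m_s m_r : ℕ) (h : m_s ≤ m_r)
    (T : Fin m_r → Finset (Fin m_s))
    (M : Matrix (Fin m_s ⊕ Fin m_r) (Fin m_s) (ZMod 2))
    (htop : ∀ i j : Fin m_s, M (Sum.inl i) j = if i = j then 1 else 0)
    (hbot : ∀ (r : Fin m_r) (t : Fin m_s), M (Sum.inr r) t = if t ∈ T r then 1 else 0)
    (s : Fin m_s) :
    ∃ E : Finset (Fin m_r),
      E.card ≤ 1 + (Finset.univ.filter fun r => s ∈ T r).card ∧
      ∃ j : Fin m_s,
        (∀ i : Fin m_s, Fin.castLE h i ∉ E → M (Sum.inl i) j = 0) ∧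
        (∀ r : Fin m_r, r ∉ E → M (Sum.inr r) j = 0) ∧
        (M.submatrix
          (Sum.map (Subtype.val : {i : Fin m_s // Fin.castLE h i ∉ E} → Fin m_s)
            (Subtype.val : {r : Fin m_r // r ∉ E} → Fin m_r)) id).rank < m_s := by
  classical
  set E := insert (Fin.castLE h s) (univ.filter fun r => s ∈ T r)
  have hsource : ∀ i : Fin m_s, Fin.castLE h i ∉ E → M (Sum.inl i) s = 0 := by
    intro i hi
    have his : i ≠ s := by
      rintro rfl
      exact hi (mem_insert_self _ _)
    simp [htop, his]
  have hrelay : ∀ r : Fin m_r, r ∉ E → M (Sum.inr r) s = 0 := by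
    intro r hr
    have hsr : s ∉ T r := fun hs => hr (mem_insert_of_mem (mem_filter.2 ⟨mem_univ r, hs⟩))
    simp [hbot, hsr]
  refine ⟨E, (card_insert_le _ _).trans_eq (add_comm _ _), s, hsource, hrelay, ?_⟩
  simpa using Matrix.rank_lt_card_width_of_col_eq_zero_s13 _ s <| by
    rintro (⟨i, hi⟩ | ⟨r, hr⟩)
    exacts [hsource i hi, hrelay r hr]

/-- core of Proposition 2: erase the channel of source `s`
together with the channels of all `t_s` relays helping `s`; the remaining rows
of the coding matrix `M` have an all-zero column, hence rank `< m_s`. -/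
theorem stmt_13 (m_s m_r : ℕ) (hms : 1 ≤ m_s) (h : m_s ≤ m_r)
    (T : Fin m_r → Finset (Fin m_s))
    (M : Matrix (Fin m_s ⊕ Fin m_r) (Fin m_s) (ZMod 2))
    (htop : ∀ i j : Fin m_s, M (Sum.inl i) j = if i = j then 1 else 0)
    (hbot : ∀ (r : Fin m_r) (t : Fin m_s), M (Sum.inr r) t = if t ∈ T r then 1 else 0)
    (s : Fin m_s) :
    ∃ E : Finset (Fin m_r),
      E.card ≤ 1 + (Finset.univ.filter fun r => s ∈ T r).card ∧
      ∃ j : Fin m_s,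
        (∀ i : Fin m_s, Fin.castLE h i ∉ E → M (Sum.inl i) j = 0) ∧
        (∀ r : Fin m_r, r ∉ E → M (Sum.inr r) j = 0) ∧
        (M.submatrix
          (Sum.map (Subtype.val : {i : Fin m_s // Fin.castLE h i ∉ E} → Fin m_s)
            (Subtype.val : {r : Fin m_r // r ∉ E} → Fin m_r)) id).rank < m_s :=
  stmt_13_general m_s m_r h T M htop hbot s
end
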